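/- Let H be a complex Hilbert space of finite dimension N, let U = (u_k) and V = (v_ℓ) be two orthonormal bases of H (each being its own dual frame), and let r ∈ (1,2]. If some x ∈ H, x ≠ 0, achieves equality ‖a‖₀ · ‖b‖₀ = 1/(μ_r(U,V) · μ_r(V,U)) for its analysis coefficients a = (⟨x,u_k⟩)_k and b = (⟨x,v_ℓ⟩)_ℓ, then ‖a‖₀ = ‖b‖₀ = 1; consequently there exist indices k₀, ℓ₀ and a unimodular scalar c with v_{ℓ₀} = c·u_{k₀}, and x is a scalar multiple of u_{k₀}. -/

import Mathlib

open scoped InnerProductSpace ENNReal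

noncomputable section

variable {H : Type*} [NormedAddCommGroup H] [InnerProductSpace ℂ H] {Λ : Type*}

/-- `u` is a frame for `H` with frame bounds `0 < A ≤ B`. -/
def IsFrameWith (u : Λ → H) (A B : ℝ) : Prop :=
  0 < A ∧ A ≤ B ∧ ∀ x : H,
    A * ‖x‖ ^ 2 ≤ ∑' k, ‖⟪x, u k⟫_ℂ‖ ^ 2 ∧ ∑' k, ‖⟪x, u k⟫_ℂ‖ ^ 2 ≤ B * ‖x‖ ^ 2

/-- `u` is a frame for `H`. -/
def IsFrame (u : Λ → H) : Prop := ∃ A B, IsFrameWith u A B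

/-- `u` is a tight frame for `H` with frame constant `A`. -/
def IsTightFrame (u : Λ → H) (A : ℝ) : Prop :=
  0 < A ∧ ∀ x : H, ∑' k, ‖⟪x, u k⟫_ℂ‖ ^ 2 = A * ‖x‖ ^ 2

/-- `ut` is a dual frame of the frame `u`: it is a frame and `x = Σ_k ⟨x,u_k⟩ ũ_k` for all `x`. -/
def IsDualFrame (u ut : Λ → H) : Prop :=
  IsFrame ut ∧ ∀ x : H, HasSum (fun k => ⟪x, u k⟫_ℂ • ut k) x

/-- Mutual coherence of order `r ∈ [1,2]` (`ℝ≥0∞`-valued, for countable index sets).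
For `r ≠ 1` the conjugate exponent is `r' = r/(r-1)`, and `r/r' = r - 1`, so
`μ_r = sup_ℓ (Σ_k |⟨ũ_k,v_ℓ⟩|^{r'})^{r/r'}`; for `r = 1` it is `sup_{k,ℓ} |⟨ũ_k,v_ℓ⟩|`. -/
def mu (r : ℝ) (ut v : Λ → H) : ℝ≥0∞ :=
  if r = 1 then ⨆ ℓ, ⨆ k, (‖⟪ut k, v ℓ⟫_ℂ‖₊ : ℝ≥0∞)
  else ⨆ ℓ, (∑' k, (‖⟪ut k, v ℓ⟫_ℂ‖₊ : ℝ≥0∞) ^ (r / (r - 1))) ^ (r - 1)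

/-- Generalized coherence `μ⋆(U,Ũ,V,Ṽ) = inf_{r ∈ [1,2]} √(μ_r(Ũ,V)·μ_r(Ṽ,U))`. -/
def mustar (u ut v vt : Λ → H) : ℝ≥0∞ :=
  ⨅ r : Set.Icc (1 : ℝ) 2, (mu (r : ℝ) ut v * mu (r : ℝ) vt u) ^ ((1 : ℝ) / 2)

/-- `‖a‖₀ ∈ ℕ ∪ {∞}`: the number of nonzero entries of the sequence `a`. -/
def l0 (a : Λ → ℂ) : ℕ∞ := (Function.support a).encard

/-- Mutual coherence of order `r ∈ [1,2]` (real-valued, finite index sets). -/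
def muF [Fintype Λ] (r : ℝ) (ut v : Λ → H) : ℝ :=
  if r = 1 then ⨆ ℓ, ⨆ k, ‖⟪ut k, v ℓ⟫_ℂ‖
  else ⨆ ℓ, (∑ k, ‖⟪ut k, v ℓ⟫_ℂ‖ ^ (r / (r - 1))) ^ (r - 1)

/-- Generalized coherence (real-valued, finite index sets). -/
def mustarF [Fintype Λ] (u ut v vt : Λ → H) : ℝ :=
  ⨅ r : Set.Icc (1 : ℝ) 2, Real.sqrt (muF (r : ℝ) ut v * muF (r : ℝ) vt u)

/-- Rényi entropy of order `α` of the (nonzero) sequence `a`, computed on the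
normalization `ã = a/‖a‖₂`: `R_α(a) = (1-α)⁻¹ ln Σ_k |ã_k|^{2α}`. -/
def renyi [Fintype Λ] (α : ℝ) (a : Λ → ℂ) : ℝ :=
  (1 - α)⁻¹ * Real.log (∑ k, (‖a k‖ ^ 2 / ∑ j, ‖a j‖ ^ 2) ^ α)

/-- Shannon entropy of the (nonzero) sequence `a`, computed on `ã = a/‖a‖₂`,
with the convention `0·ln 0 = 0`. -/
def shannon [Fintype Λ] (a : Λ → ℂ) : ℝ :=
  -∑ k, (‖a k‖ ^ 2 / ∑ j, ‖a j‖ ^ 2) * Real.log (‖a k‖ ^ 2 / ∑ j, ‖a j‖ ^ 2)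

/-!
Let `a = (⟪x, u_k⟫)`, `b = (⟪x, v_ℓ⟫)` have supports of sizes `A`, `B`, and let `ℓ` maximize
`|b_ℓ|`, so that `‖x‖² ≤ B |b_ℓ|²`. Hölder's inequality on `b_ℓ = Σ_{k ∈ supp a} a_k ⟪u_k, v_ℓ⟫`
and the power-mean inequality `‖a‖_r ≤ A^{1/r - 1/2} ‖a‖_2` give
`1 ≤ B^{r/2} A^{1-r/2} t^{r-1} ≤ B^{r/2} A^{1-r/2} μ_r(U,V)`, where `t` is the `r'`-th power sum
of the `ℓ`-th column of the Gram matrix `(⟪u_k, v_ℓ⟫)` over `supp a`. The product of this bound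
with the symmetric one is `A B μ_r(U,V) μ_r(V,U)`, so under the equality hypothesis both are
equalities. Then `t^{r-1} = μ_r(U,V)`, so the `ℓ`-th column vanishes off `supp a`; being a unit
vector, the power-mean inequality applied to it gives `1 ≤ A^{1-r/2} t^{r-1}`, whence
`B^{r/2} ≤ 1`. Symmetrically `A = 1`, and `x` is a multiple of a single `u_{k₀}` and of a single
`v_{ℓ₀}`.
-/

open Finset

theorem sum_rpow_le_card_rpow_mul_sum_rpow {ι : Type*} (s : Finset ι) {f : ι → ℝ}
    (hf : ∀ i ∈ s, 0 ≤ f i) {p q : ℝ} (hp : 0 < p) (hpq : p ≤ q) :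
    ∑ i ∈ s, f i ^ p ≤ (#s : ℝ) ^ (1 - p / q) * (∑ i ∈ s, f i ^ q) ^ (p / q) := by
  have hq : 0 < q := hp.trans_le hpq
  have hfp : ∀ i ∈ s, 0 ≤ f i ^ p := fun i hi => Real.rpow_nonneg (hf i hi) p
  have hfq : 0 ≤ ∑ i ∈ s, f i ^ q := sum_nonneg fun i hi => Real.rpow_nonneg (hf i hi) q
  have key := Real.rpow_sum_le_const_mul_sum_rpow_of_nonneg s ((one_le_div hp).2 hpq) hfp
  have hpow : ∀ i ∈ s, (f i ^ p) ^ (q / p) = f i ^ q := fun i hi => by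
    rw [← Real.rpow_mul (hf i hi), mul_div_cancel₀ _ hp.ne']
  rw [sum_congr rfl hpow] at key
  calc ∑ i ∈ s, f i ^ p = ((∑ i ∈ s, f i ^ p) ^ (q / p)) ^ (p / q) := by
        rw [← Real.rpow_mul (sum_nonneg hfp), div_mul_div_cancel₀ hp.ne', div_self hq.ne',
          Real.rpow_one]
    _ ≤ ((#s : ℝ) ^ (q / p - 1) * ∑ i ∈ s, f i ^ q) ^ (p / q) :=
        Real.rpow_le_rpow (Real.rpow_nonneg (sum_nonneg hfp) _) key (by positivity)
    _ = (#s : ℝ) ^ (1 - p / q) * (∑ i ∈ s, f i ^ q) ^ (p / q) := by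
        rw [Real.mul_rpow (by positivity) hfq, ← Real.rpow_mul (Nat.cast_nonneg _)]
        congr 2
        field_simp

theorem one_le_card_rpow_mul_sum_rpow_rpow {ι : Type*} {s : Finset ι} {g : ι → ℝ}
    (hg : ∀ i ∈ s, 0 ≤ g i) (hunit : ∑ i ∈ s, g i ^ 2 = 1) {r : ℝ} (hr1 : 1 < r) (hr2 : r ≤ 2) :
    1 ≤ (#s : ℝ) ^ (1 - r / 2) * (∑ i ∈ s, g i ^ (r / (r - 1))) ^ (r - 1) := by
  set q := r / (r - 1) with hq_def
  have hq : 2 ≤ q := by rw [le_div_iff₀ (by linarith)]; linarith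
  have h := sum_rpow_le_card_rpow_mul_sum_rpow s hg two_pos hq
  simp only [Real.rpow_two, hunit] at h
  have hexp₁ : (1 - 2 / q) * (r / 2) = 1 - r / 2 := by rw [hq_def]; field_simp; ring
  have hexp₂ : 2 / q * (r / 2) = r - 1 := by rw [hq_def]; field_simp
  have ht : 0 ≤ ∑ i ∈ s, g i ^ q := sum_nonneg fun i hi => Real.rpow_nonneg (hg i hi) q
  calc (1 : ℝ) = 1 ^ (r / 2) := (Real.one_rpow _).symm
    _ ≤ ((#s : ℝ) ^ (1 - 2 / q) * (∑ i ∈ s, g i ^ q) ^ (2 / q)) ^ (r / 2) := by gcongr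
    _ = (#s : ℝ) ^ (1 - r / 2) * (∑ i ∈ s, g i ^ q) ^ (r - 1) := by
      rw [Real.mul_rpow (by positivity) (by positivity), ← Real.rpow_mul (Nat.cast_nonneg _),
        ← Real.rpow_mul ht, hexp₁, hexp₂]

namespace OrthonormalBasis

variable {𝕜 E ι : Type*} [RCLike 𝕜] [NormedAddCommGroup E] [InnerProductSpace 𝕜 E] [Fintype ι]

open Classical in
def coeffSupport (b : OrthonormalBasis ι 𝕜 E) (x : E) : Finset ι := {k | ⟪x, b k⟫_𝕜 ≠ 0}

variable (b : OrthonormalBasis ι 𝕜 E) {x : E}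

theorem mem_coeffSupport {k : ι} : k ∈ b.coeffSupport x ↔ ⟪x, b k⟫_𝕜 ≠ 0 := by
  simp [coeffSupport]

theorem notMem_coeffSupport {k : ι} : k ∉ b.coeffSupport x ↔ ⟪x, b k⟫_𝕜 = 0 := by
  simp [mem_coeffSupport]

theorem ncard_support_inner_eq_card_coeffSupport (x : E) :
    (Function.support fun k => ⟪x, b k⟫_𝕜).ncard = #(b.coeffSupport x) := by
  rw [← Set.ncard_coe_finset]
  congr 1
  ext k
  simp [mem_coeffSupport]

theorem sum_coeffSupport_sq_norm_inner (x : E) :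
    ∑ k ∈ b.coeffSupport x, ‖⟪x, b k⟫_𝕜‖ ^ 2 = ‖x‖ ^ 2 := by
  rw [← b.sum_sq_norm_inner_left x]
  refine sum_subset (subset_univ _) fun k _ hk => ?_
  simp [(b.notMem_coeffSupport).1 hk]

theorem sum_coeffSupport_inner_mul_inner (x y : E) :
    ∑ k ∈ b.coeffSupport x, ⟪x, b k⟫_𝕜 * ⟪b k, y⟫_𝕜 = ⟪x, y⟫_𝕜 := by
  rw [← b.sum_inner_mul_inner x y]
  refine sum_subset (subset_univ _) fun k _ hk => ?_
  simp [(b.notMem_coeffSupport).1 hk]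

theorem coeffSupport_nonempty (hx : x ≠ 0) : (b.coeffSupport x).Nonempty := by
  rw [nonempty_iff_ne_empty]
  intro h
  have := b.sum_coeffSupport_sq_norm_inner x
  rw [h, sum_empty, eq_comm] at this
  exact hx (by simpa using this)

theorem norm_inner_le_Lp_mul_Lq {p q : ℝ} (hpq : p.HolderConjugate q) (x y : E) :
    ‖⟪x, y⟫_𝕜‖ ≤ (∑ k ∈ b.coeffSupport x, ‖⟪x, b k⟫_𝕜‖ ^ p) ^ (1 / p) *
      (∑ k ∈ b.coeffSupport x, ‖⟪b k, y⟫_𝕜‖ ^ q) ^ (1 / q) :=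
  calc ‖⟪x, y⟫_𝕜‖ = ‖∑ k ∈ b.coeffSupport x, ⟪x, b k⟫_𝕜 * ⟪b k, y⟫_𝕜‖ := by
        rw [b.sum_coeffSupport_inner_mul_inner]
    _ ≤ ∑ k ∈ b.coeffSupport x, ‖⟪x, b k⟫_𝕜‖ * ‖⟪b k, y⟫_𝕜‖ :=
        (norm_sum_le _ _).trans_eq (by simp only [norm_mul])
    _ ≤ _ := Real.inner_le_Lp_mul_Lq_of_nonneg _ hpq (fun _ _ => norm_nonneg _)
        (fun _ _ => norm_nonneg _)

theorem exists_sq_norm_le_card_mul_sq_norm_inner (hx : x ≠ 0) :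
    ∃ k, ‖x‖ ^ 2 ≤ #(b.coeffSupport x) * ‖⟪x, b k⟫_𝕜‖ ^ 2 := by
  obtain ⟨k, -, hk⟩ := exists_max_image (b.coeffSupport x) (fun k => ‖⟪x, b k⟫_𝕜‖)
    (b.coeffSupport_nonempty hx)
  refine ⟨k, ?_⟩
  rw [← b.sum_coeffSupport_sq_norm_inner x, ← nsmul_eq_mul, ← sum_const]
  exact sum_le_sum fun j hj => pow_le_pow_left₀ (norm_nonneg _) (hk j hj) 2

theorem exists_eq_inner_smul_of_card_coeffSupport_eq_one (h : #(b.coeffSupport x) = 1) :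
    ∃ k, x = ⟪b k, x⟫_𝕜 • b k := by
  obtain ⟨k, hk⟩ := card_eq_one.1 h
  refine ⟨k, ?_⟩
  conv_lhs => rw [← b.sum_repr' x]
  refine sum_eq_single k (fun j _ hj => ?_) (fun h => absurd (mem_univ k) h)
  have : ⟪x, b j⟫_𝕜 = 0 := (b.notMem_coeffSupport).1 (by simpa [hk] using hj)
  rw [inner_eq_zero_symm.1 this, zero_smul]

theorem exists_one_le_card_rpow_mul_card_rpow_mul_rpow (U V : OrthonormalBasis ι 𝕜 E) {r : ℝ}
    (hr1 : 1 < r) (hr2 : r ≤ 2) (hx : x ≠ 0) :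
    ∃ ℓ, 1 ≤ (#(V.coeffSupport x) : ℝ) ^ (r / 2) * (#(U.coeffSupport x) : ℝ) ^ (1 - r / 2) *
      (∑ k ∈ U.coeffSupport x, ‖⟪U k, V ℓ⟫_𝕜‖ ^ (r / (r - 1))) ^ (r - 1) := by
  have hr0 : 0 < r := by linarith
  obtain ⟨ℓ, hℓ⟩ := V.exists_sq_norm_le_card_mul_sq_norm_inner hx
  refine ⟨ℓ, ?_⟩
  set A := (#(U.coeffSupport x) : ℝ)
  set B := (#(V.coeffSupport x) : ℝ)
  set X := ∑ k ∈ U.coeffSupport x, ‖⟪x, U k⟫_𝕜‖ ^ r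
  set t := ∑ k ∈ U.coeffSupport x, ‖⟪U k, V ℓ⟫_𝕜‖ ^ (r / (r - 1))
  have hX : 0 ≤ X := sum_nonneg fun _ _ => by positivity
  have ht : 0 ≤ t := sum_nonneg fun _ _ => by positivity
  have hholder : ‖⟪x, V ℓ⟫_𝕜‖ ^ r ≤ X * t ^ (r - 1) := by
    have h := U.norm_inner_le_Lp_mul_Lq (.conjExponent hr1) x (V ℓ)
    calc ‖⟪x, V ℓ⟫_𝕜‖ ^ r ≤ (X ^ (1 / r) * t ^ (1 / (r / (r - 1)))) ^ r := by gcongr; exact h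
      _ = X * t ^ (r - 1) := by
        rw [Real.mul_rpow (by positivity) (by positivity), ← Real.rpow_mul hX,
          one_div_mul_cancel hr0.ne', Real.rpow_one, ← Real.rpow_mul ht]
        congr 2
        field_simp
  have hpower : X ≤ A ^ (1 - r / 2) * (‖x‖ ^ 2) ^ (r / 2) := by
    have h := sum_rpow_le_card_rpow_mul_sum_rpow (U.coeffSupport x)
      (f := fun k => ‖⟪x, U k⟫_𝕜‖) (fun _ _ => norm_nonneg _) hr0 hr2
    simpa only [Real.rpow_two, U.sum_coeffSupport_sq_norm_inner] using h
  have hmax : (‖x‖ ^ 2) ^ (r / 2) ≤ B ^ (r / 2) * ‖⟪x, V ℓ⟫_𝕜‖ ^ r :=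
    calc (‖x‖ ^ 2) ^ (r / 2) ≤ (B * ‖⟪x, V ℓ⟫_𝕜‖ ^ 2) ^ (r / 2) := by gcongr
      _ = B ^ (r / 2) * ‖⟪x, V ℓ⟫_𝕜‖ ^ r := by
        rw [Real.mul_rpow (by positivity) (by positivity), ← Real.rpow_two,
          ← Real.rpow_mul (norm_nonneg _)]
        ring_nf
  have hnorm : 0 < (‖x‖ ^ 2) ^ (r / 2) := by
    have := norm_pos_iff.2 hx
    positivity
  refine le_of_mul_le_mul_right ?_ hnorm
  calc 1 * (‖x‖ ^ 2) ^ (r / 2) ≤ B ^ (r / 2) * ‖⟪x, V ℓ⟫_𝕜‖ ^ r := by rw [one_mul]; exact hmax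
    _ ≤ B ^ (r / 2) * (X * t ^ (r - 1)) := by gcongr
    _ ≤ B ^ (r / 2) * (A ^ (1 - r / 2) * (‖x‖ ^ 2) ^ (r / 2) * t ^ (r - 1)) := by gcongr
    _ = B ^ (r / 2) * A ^ (1 - r / 2) * t ^ (r - 1) * (‖x‖ ^ 2) ^ (r / 2) := by ring

end OrthonormalBasis

theorem exists_norm_eq_one_and_eq_smul_of_smul_eq_smul {𝕜 E : Type*} [NormedField 𝕜]
    [NormedAddCommGroup E] [NormedSpace 𝕜 E] {u v : E} (hu : ‖u‖ = 1) (hv : ‖v‖ = 1)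
    {s t : 𝕜} (h : s • u = t • v) (hne : s • u ≠ 0) : ∃ c : 𝕜, ‖c‖ = 1 ∧ v = c • u := by
  have ht : t ≠ 0 := by rintro rfl; simp_all
  have hst : ‖s‖ = ‖t‖ := by simpa [norm_smul, hu, hv] using congrArg norm h
  refine ⟨t⁻¹ * s, ?_, ?_⟩
  · rw [norm_mul, norm_inv, hst, inv_mul_cancel₀ (norm_ne_zero_iff.2 ht)]
  · rw [mul_smul, h, smul_smul, inv_mul_cancel₀ ht, one_smul]

section Coherence

variable {E ι : Type*} [NormedAddCommGroup E] [InnerProductSpace ℂ E] [Fintype ι]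

theorem rpow_sum_rpow_le_muF {r : ℝ} (hr : 1 < r) (ut v : ι → E) (ℓ : ι) (s : Finset ι) :
    (∑ k ∈ s, ‖⟪ut k, v ℓ⟫_ℂ‖ ^ (r / (r - 1))) ^ (r - 1) ≤ muF r ut v := by
  rw [muF, if_neg hr.ne']
  refine le_trans ?_ (le_ciSup (Set.finite_range _).bddAbove ℓ)
  exact Real.rpow_le_rpow (sum_nonneg fun _ _ => by positivity)
    (sum_le_sum_of_subset_of_nonneg (subset_univ _) fun _ _ _ => by positivity) (by linarith)

variable (U V : OrthonormalBasis ι ℂ E) {r : ℝ} {x : E}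

theorem one_le_card_rpow_mul_muF (hr1 : 1 < r) (hr2 : r ≤ 2) (hx : x ≠ 0) :
    1 ≤ (#(V.coeffSupport x) : ℝ) ^ (r / 2) * (#(U.coeffSupport x) : ℝ) ^ (1 - r / 2) *
      muF r U V := by
  obtain ⟨ℓ, hℓ⟩ := U.exists_one_le_card_rpow_mul_card_rpow_mul_rpow V hr1 hr2 hx
  exact hℓ.trans (by gcongr; exact rpow_sum_rpow_le_muF hr1 U V ℓ _)

theorem card_coeffSupport_eq_one_of_card_rpow_mul_muF_le_one (hr1 : 1 < r) (hr2 : r ≤ 2)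
    (hx : x ≠ 0)
    (hle : (#(V.coeffSupport x) : ℝ) ^ (r / 2) * (#(U.coeffSupport x) : ℝ) ^ (1 - r / 2) *
      muF r U V ≤ 1) :
    #(V.coeffSupport x) = 1 := by
  obtain ⟨ℓ, hℓ⟩ := U.exists_one_le_card_rpow_mul_card_rpow_mul_rpow V hr1 hr2 hx
  set q := r / (r - 1)
  set A := (#(U.coeffSupport x) : ℝ)
  set B := (#(V.coeffSupport x) : ℝ)
  set t := ∑ k ∈ U.coeffSupport x, ‖⟪U k, V ℓ⟫_ℂ‖ ^ q
  have hA : 0 < A := Nat.cast_pos.2 (U.coeffSupport_nonempty hx).card_pos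
  have hB : 0 < B := Nat.cast_pos.2 (V.coeffSupport_nonempty hx).card_pos
  have ht : 0 ≤ t := sum_nonneg fun _ _ => by positivity
  have htμ : t ^ (r - 1) ≤ muF r U V := rpow_sum_rpow_le_muF hr1 U V ℓ _
  have hμt : muF r U V ≤ t ^ (r - 1) := le_of_mul_le_mul_left (hle.trans hℓ) (by positivity)
  have hcol : ∀ k ∉ U.coeffSupport x, ⟪U k, V ℓ⟫_ℂ = 0 := by
    intro k hk
    by_contra hne
    have hlt : t < ∑ k, ‖⟪U k, V ℓ⟫_ℂ‖ ^ q := sum_lt_sum_of_subset (subset_univ _) (mem_univ k)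
      hk (by positivity) fun _ _ _ => by positivity
    have := (Real.rpow_lt_rpow ht hlt (by linarith)).trans_le
      (rpow_sum_rpow_le_muF hr1 U V ℓ univ)
    linarith
  have hunit : ∑ k ∈ U.coeffSupport x, ‖⟪U k, V ℓ⟫_ℂ‖ ^ 2 = 1 := by
    rw [sum_subset (subset_univ _) fun k _ hk => by simp [hcol k hk],
      U.sum_sq_norm_inner_right, V.orthonormal.1 ℓ, one_pow]
  have hpower : 1 ≤ A ^ (1 - r / 2) * t ^ (r - 1) :=
    one_le_card_rpow_mul_sum_rpow_rpow (fun _ _ => norm_nonneg _) hunit hr1 hr2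
  have hBr : B ^ (r / 2) ≤ 1 :=
    calc B ^ (r / 2) ≤ B ^ (r / 2) * (A ^ (1 - r / 2) * t ^ (r - 1)) :=
          le_mul_of_one_le_right (by positivity) hpower
      _ ≤ B ^ (r / 2) * A ^ (1 - r / 2) * muF r U V := by rw [mul_assoc]; gcongr
      _ ≤ 1 := hle
  have hB1 : B ≤ 1 := by
    rwa [← Real.rpow_le_rpow_iff hB.le zero_le_one (by positivity : 0 < r / 2), Real.one_rpow]
  exact le_antisymm (Nat.cast_le_one.1 hB1) (V.coeffSupport_nonempty hx).card_pos

end Coherence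

theorem stmt7_general {H : Type*} [NormedAddCommGroup H] [InnerProductSpace ℂ H]
    {Λ : Type*} [Fintype Λ]
    (U V : OrthonormalBasis Λ ℂ H)
    (r : ℝ) (hr : r ∈ Set.Ioc (1 : ℝ) 2) (x : H) (hx : x ≠ 0)
    (heq : (((Function.support fun k => ⟪x, U k⟫_ℂ).ncard *
              (Function.support fun ℓ => ⟪x, V ℓ⟫_ℂ).ncard : ℕ) : ℝ) =
            1 / (muF r (⇑U) (⇑V) * muF r (⇑V) (⇑U))) :
    (Function.support fun k => ⟪x, U k⟫_ℂ).ncard = 1 ∧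
    (Function.support fun ℓ => ⟪x, V ℓ⟫_ℂ).ncard = 1 ∧
    ∃ (k₀ ℓ₀ : Λ) (c : ℂ), ‖c‖ = 1 ∧ V ℓ₀ = c • U k₀ ∧ ∃ t : ℂ, x = t • U k₀ := by
  obtain ⟨hr1, hr2⟩ := hr
  simp only [U.ncard_support_inner_eq_card_coeffSupport,
    V.ncard_support_inner_eq_card_coeffSupport, Nat.cast_mul] at heq ⊢
  set A := (#(U.coeffSupport x) : ℝ)
  set B := (#(V.coeffSupport x) : ℝ)
  have h₁ := one_le_card_rpow_mul_muF U V hr1 hr2 hx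
  have h₂ := one_le_card_rpow_mul_muF V U hr1 hr2 hx
  have hμ : muF r U V * muF r V U ≠ 0 := by
    rintro h
    rcases mul_eq_zero.1 h with h | h <;> simp only [h, mul_zero] at h₁ h₂ <;> linarith
  have hsplit : ∀ a : ℝ, 0 ≤ a → a ^ (r / 2) * a ^ (1 - r / 2) = a := fun a ha => by
    rw [← Real.rpow_add' ha (by norm_num), add_sub_cancel, Real.rpow_one]
  have hprod : (B ^ (r / 2) * A ^ (1 - r / 2) * muF r U V) *
      (A ^ (r / 2) * B ^ (1 - r / 2) * muF r V U) = 1 :=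
    calc _ = (A ^ (r / 2) * A ^ (1 - r / 2)) * (B ^ (r / 2) * B ^ (1 - r / 2)) *
          (muF r U V * muF r V U) := by ring
      _ = 1 := by
        rw [hsplit A (by positivity), hsplit B (by positivity), heq, one_div_mul_cancel hμ]
  have hB := card_coeffSupport_eq_one_of_card_rpow_mul_muF_le_one U V hr1 hr2 hx (by nlinarith)
  have hA := card_coeffSupport_eq_one_of_card_rpow_mul_muF_le_one V U hr1 hr2 hx (by nlinarith)
  obtain ⟨k₀, hxU⟩ := U.exists_eq_inner_smul_of_card_coeffSupport_eq_one hA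
  obtain ⟨ℓ₀, hxV⟩ := V.exists_eq_inner_smul_of_card_coeffSupport_eq_one hB
  obtain ⟨c, hc, hVU⟩ := exists_norm_eq_one_and_eq_smul_of_smul_eq_smul (U.orthonormal.1 k₀)
    (V.orthonormal.1 ℓ₀) (hxU.symm.trans hxV) (hxU ▸ hx)
  exact ⟨hA, hB, k₀, ℓ₀, c, hc, hVU, _, hxU⟩

/-- for two orthonormal bases and `r ∈ (1,2]`, equality in the refined
Elad–Bruckstein inequality forces `‖a‖₀ = ‖b‖₀ = 1`, the two bases share a common element
(up to a unimodular factor), and `x` is a multiple of it. -/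
theorem stmt7 {H : Type*} [NormedAddCommGroup H] [InnerProductSpace ℂ H]
    [FiniteDimensional ℂ H] {Λ : Type*} [Fintype Λ] [Nonempty Λ]
    (U V : OrthonormalBasis Λ ℂ H)
    (r : ℝ) (hr : r ∈ Set.Ioc (1 : ℝ) 2) (x : H) (hx : x ≠ 0)
    (heq : (((Function.support fun k => ⟪x, U k⟫_ℂ).ncard *
              (Function.support fun ℓ => ⟪x, V ℓ⟫_ℂ).ncard : ℕ) : ℝ) =
            1 / (muF r (⇑U) (⇑V) * muF r (⇑V) (⇑U))) :
    (Function.support fun k => ⟪x, U k⟫_ℂ).ncard = 1 ∧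
    (Function.support fun ℓ => ⟪x, V ℓ⟫_ℂ).ncard = 1 ∧
    ∃ (k₀ ℓ₀ : Λ) (c : ℂ), ‖c‖ = 1 ∧ V ℓ₀ = c • U k₀ ∧ ∃ t : ℂ, x = t • U k₀ :=
  stmt7_general U V r hr x hx heq
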